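/- Let μ be a probability measure on a set K, and let {A_i}_{i∈I} and {B_j}_{j∈J} be two measurable partitions of K such that each A_i is covered by at most M of the sets B_j. Then for any q ≥ 1, Σ_{i∈I} μ(A_i)^q ≤ M^{q−1} Σ_{j∈J} μ(B_j)^q. -/

import Mathlib

/-!
Split each `A i` along the at most `M` sets `B j` covering it: by the power-mean inequality,
`μ(A i)^q ≤ M^(q-1) ∑ⱼ μ(A i ∩ B j)^q`. Summing over `i` and exchanging the sums, it remains to
see that `∑ᵢ μ(A i ∩ B j)^q ≤ μ(B j)^q`. The pieces `A i ∩ B j` are disjoint, so their measures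
`xᵢ` sum to at most `μ(B j)`, and `xᵢ^q ≤ μ(B j)^(q-1) xᵢ` sums to that bound.
-/

open MeasureTheory Set
open scoped ENNReal

namespace ENNReal

theorem tsum_rpow_le_rpow_tsum {ι : Type*} (f : ι → ℝ≥0∞) {q : ℝ} (hq : 1 ≤ q) :
    ∑' i, f i ^ q ≤ (∑' i, f i) ^ q := by
  have hsplit : ∀ x : ℝ≥0∞, x ^ q = x ^ (q - 1) * x := fun x => by
    simpa using rpow_add_of_nonneg (x := x) (q - 1) 1 (by linarith) zero_le_one
  calc ∑' i, f i ^ q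
      ≤ ∑' i, (∑' i, f i) ^ (q - 1) * f i := by
        refine ENNReal.tsum_le_tsum fun i => ?_
        rw [hsplit]
        gcongr
        exact ENNReal.le_tsum i
    _ = (∑' i, f i) ^ q := by rw [ENNReal.tsum_mul_left, ← hsplit]

theorem tsum_toReal_rpow {ι : Type*} {f : ι → ℝ≥0∞} (hf : ∀ i, f i ≠ ∞) {q : ℝ} (hq : 0 ≤ q) :
    ∑' i, (f i).toReal ^ q = (∑' i, f i ^ q).toReal := by
  rw [ENNReal.tsum_toReal_eq fun i => rpow_ne_top_of_nonneg hq (hf i)]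
  exact tsum_congr fun i => toReal_rpow _ _

end ENNReal

namespace MeasureTheory

variable {α ι κ : Type*} [MeasurableSpace α] (μ : Measure α)

theorem tsum_measure_inter_le {A : ι → Set α} (hA : ∀ i, MeasurableSet (A i))
    (hAdisj : Pairwise (Function.onFun Disjoint A)) (t : Set α) :
    ∑' i, μ (A i ∩ t) ≤ μ t := by
  simp_rw [← Measure.restrict_apply (hA _)]
  calc ∑' i, μ.restrict t (A i) ≤ μ.restrict t (⋃ i, A i) :=
        tsum_meas_le_meas_iUnion_of_disjoint _ hA hAdisj
    _ ≤ μ.restrict t univ := measure_mono (subset_univ _)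
    _ = μ t := by rw [Measure.restrict_apply_univ]

theorem measure_rpow_le_card_rpow_mul_tsum_inter {s : Set α} {t : κ → Set α} {S : Finset κ}
    (hst : s ⊆ ⋃ j ∈ S, t j) {q : ℝ} (hq : 1 ≤ q) :
    μ s ^ q ≤ (S.card : ℝ≥0∞) ^ (q - 1) * ∑' j, μ (s ∩ t j) ^ q := by
  have hcover : μ s ≤ ∑ j ∈ S, μ (s ∩ t j) := calc
    μ s = μ (⋃ j ∈ S, s ∩ t j) := by rw [← inter_iUnion₂, inter_eq_left.2 hst]
    _ ≤ ∑ j ∈ S, μ (s ∩ t j) := measure_biUnion_finset_le S _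
  calc μ s ^ q ≤ (∑ j ∈ S, μ (s ∩ t j)) ^ q := by gcongr
    _ ≤ (S.card : ℝ≥0∞) ^ (q - 1) * ∑ j ∈ S, μ (s ∩ t j) ^ q :=
        ENNReal.rpow_sum_le_const_mul_sum_rpow S _ hq
    _ ≤ (S.card : ℝ≥0∞) ^ (q - 1) * ∑' j, μ (s ∩ t j) ^ q := by
        gcongr; exact ENNReal.sum_le_tsum S

theorem tsum_measure_rpow_le_of_forall_subset_biUnion {A : ι → Set α} {B : κ → Set α}
    (hA : ∀ i, MeasurableSet (A i)) (hAdisj : Pairwise (Function.onFun Disjoint A)) {M : ℕ}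
    (hM : ∀ i, ∃ S : Finset κ, S.card ≤ M ∧ A i ⊆ ⋃ j ∈ S, B j) {q : ℝ} (hq : 1 ≤ q) :
    ∑' i, μ (A i) ^ q ≤ (M : ℝ≥0∞) ^ (q - 1) * ∑' j, μ (B j) ^ q := by
  have hsplit : ∀ i, μ (A i) ^ q ≤ (M : ℝ≥0∞) ^ (q - 1) * ∑' j, μ (A i ∩ B j) ^ q := fun i => by
    obtain ⟨S, hSM, hS⟩ := hM i
    calc μ (A i) ^ q ≤ (S.card : ℝ≥0∞) ^ (q - 1) * ∑' j, μ (A i ∩ B j) ^ q :=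
          measure_rpow_le_card_rpow_mul_tsum_inter μ hS hq
      _ ≤ (M : ℝ≥0∞) ^ (q - 1) * ∑' j, μ (A i ∩ B j) ^ q := by gcongr
  have hpieces : ∀ j, ∑' i, μ (A i ∩ B j) ^ q ≤ μ (B j) ^ q := fun j =>
    (ENNReal.tsum_rpow_le_rpow_tsum _ hq).trans <| by
      gcongr
      exact tsum_measure_inter_le μ hA hAdisj (B j)
  calc ∑' i, μ (A i) ^ q
      ≤ ∑' i, (M : ℝ≥0∞) ^ (q - 1) * ∑' j, μ (A i ∩ B j) ^ q := ENNReal.tsum_le_tsum hsplit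
    _ = (M : ℝ≥0∞) ^ (q - 1) * ∑' j, ∑' i, μ (A i ∩ B j) ^ q := by
        rw [ENNReal.tsum_mul_left, ENNReal.tsum_comm]
    _ ≤ (M : ℝ≥0∞) ^ (q - 1) * ∑' j, μ (B j) ^ q := by gcongr with j; exact hpieces j

theorem tsum_measure_rpow_ne_top [IsFiniteMeasure μ] {B : κ → Set α}
    (hB : ∀ j, MeasurableSet (B j)) (hBdisj : Pairwise (Function.onFun Disjoint B)) {q : ℝ}
    (hq : 1 ≤ q) : ∑' j, μ (B j) ^ q ≠ ∞ := by
  refine ne_top_of_le_ne_top (ENNReal.rpow_ne_top_of_nonneg (by linarith) (measure_ne_top μ univ))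
    ((ENNReal.tsum_rpow_le_rpow_tsum _ hq).trans ?_)
  gcongr
  simpa using tsum_measure_inter_le μ hB hBdisj univ

end MeasureTheory

theorem partition_moment_sum_bound_general {Ω : Type*} [MeasurableSpace Ω] (μ : Measure Ω)
    [IsProbabilityMeasure μ] {I J : Type*}
    (A : I → Set Ω) (B : J → Set Ω)
    (hAmeas : ∀ i, MeasurableSet (A i)) (hBmeas : ∀ j, MeasurableSet (B j))
    (hAdisj : Pairwise (Function.onFun Disjoint A))
    (hBdisj : Pairwise (Function.onFun Disjoint B))
    (M : ℕ) (hM : ∀ i, ∃ S : Finset J, S.card ≤ M ∧ A i ⊆ ⋃ j ∈ S, B j)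
    (q : ℝ) (hq : 1 ≤ q) :
    ∑' i, (μ (A i)).toReal ^ q ≤ (M : ℝ) ^ (q - 1) * ∑' j, (μ (B j)).toReal ^ q := by
  have hq0 : 0 ≤ q := by linarith
  have hM_rpow : (M : ℝ) ^ (q - 1) = ((M : ℝ≥0∞) ^ (q - 1)).toReal := by
    rw [← ENNReal.toReal_rpow, ENNReal.toReal_natCast]
  rw [ENNReal.tsum_toReal_rpow (fun i => measure_ne_top μ _) hq0,
    ENNReal.tsum_toReal_rpow (fun j => measure_ne_top μ _) hq0, hM_rpow, ← ENNReal.toReal_mul]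
  refine ENNReal.toReal_mono ?_
    (tsum_measure_rpow_le_of_forall_subset_biUnion μ hAmeas hAdisj hM hq)
  exact ENNReal.mul_ne_top
    (ENNReal.rpow_ne_top_of_nonneg (sub_nonneg.2 hq) (ENNReal.natCast_ne_top M))
    (tsum_measure_rpow_ne_top μ hBmeas hBdisj hq)

/-- If `{A_i}` and `{B_j}` are measurable partitions of a probability space and each `A_i`
is covered by at most `M` of the sets `B_j`, then for any `q ≥ 1`,
`∑ μ(A_i)^q ≤ M^{q-1} ∑ μ(B_j)^q`. -/
theorem partition_moment_sum_bound {Ω : Type*} [MeasurableSpace Ω] (μ : Measure Ω)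
    [IsProbabilityMeasure μ] {I J : Type*} [Countable I] [Countable J]
    (A : I → Set Ω) (B : J → Set Ω)
    (hAmeas : ∀ i, MeasurableSet (A i)) (hBmeas : ∀ j, MeasurableSet (B j))
    (hAdisj : Pairwise (Function.onFun Disjoint A))
    (hBdisj : Pairwise (Function.onFun Disjoint B))
    (hAcov : ⋃ i, A i = univ) (hBcov : ⋃ j, B j = univ)
    (M : ℕ) (hM : ∀ i, ∃ S : Finset J, S.card ≤ M ∧ A i ⊆ ⋃ j ∈ S, B j)
    (q : ℝ) (hq : 1 ≤ q) :
    ∑' i, (μ (A i)).toReal ^ q ≤ (M : ℝ) ^ (q - 1) * ∑' j, (μ (B j)).toReal ^ q :=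
  partition_moment_sum_bound_general μ A B hAmeas hBmeas hAdisj hBdisj M hM q hq
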